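/- arXiv:2207.07362 — 5 statements merged into one kernel-verified Lean document; each statement's English description precedes it below -/
import Mathlib

section
/- Let m ∈ ℕ and let f_m : [0,1] → ℝ be the piecewise affine function that on each interval I_k^m = [k/2^m, (k+1)/2^m] (for 0 ≤ k ≤ 2^m − 1) is given by f_m(x) = (k/2^m)² + (x − k/2^m)·(2k+1)/2^m. Then the Lipschitz seminorm of x ↦ x² − f_m(x) on [0,1] is at most 1/2^m. -/
/-! With `u = 2^m x`, the error `x² - f_m(x)` equals `(fract u² - fract u) / 4^m`, so it suffices
that `φ(u) = fract u ² - fract u` is 1-Lipschitz. On a single unit interval `φ(s) - φ(t)` factors as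
`(s - t)(fract s + fract t - 1)` with the second factor in `[-1, 1]`; across an integer, `φ ≤ 0`
and `-φ(u) ≤ min (fract u) (1 - fract u)` bound the difference by
`(1 - fract s) + fract t ≤ t - s`. -/

noncomputable section

/-- Yarotsky's piecewise linear interpolant of the squaring function at dyadic
points of resolution `2^(-m)`. -/
def yarotsky (m : ℕ) (x : ℝ) : ℝ :=
  let k : ℤ := ⌊x * 2 ^ m⌋
  ((k : ℝ) / 2 ^ m) ^ 2 + (x - (k : ℝ) / 2 ^ m) * (2 * (k : ℝ) + 1) / 2 ^ m

lemma abs_fract_sq_sub_fract_sub_le_of_le {s t : ℝ} (hst : s ≤ t) :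
    |(Int.fract s ^ 2 - Int.fract s) - (Int.fract t ^ 2 - Int.fract t)| ≤ t - s := by
  have hs0 := Int.fract_nonneg s
  have hs1 := Int.fract_lt_one s
  have ht0 := Int.fract_nonneg t
  have ht1 := Int.fract_lt_one t
  rcases (Int.floor_mono hst).eq_or_lt with hfloor | hfloor
  · have hdiff : Int.fract s - Int.fract t = s - t := by
      rw [Int.fract, Int.fract, hfloor]; ring
    have hfactor : (Int.fract s ^ 2 - Int.fract s) - (Int.fract t ^ 2 - Int.fract t)
        = (s - t) * (Int.fract s + Int.fract t - 1) := by rw [← hdiff]; ring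
    have hbound : |Int.fract s + Int.fract t - 1| ≤ 1 := abs_le.2 ⟨by linarith, by linarith⟩
    calc _ = |s - t| * |Int.fract s + Int.fract t - 1| := by rw [hfactor, abs_mul]
      _ ≤ |s - t| * 1 := by gcongr
      _ = t - s := by rw [mul_one, abs_sub_comm, abs_of_nonneg (sub_nonneg.2 hst)]
  · have hgap : 1 + Int.fract t - Int.fract s ≤ t - s := by
      have : (⌊s⌋ : ℝ) + 1 ≤ ⌊t⌋ := by exact_mod_cast hfloor
      linarith [Int.floor_add_fract s, Int.floor_add_fract t]
    rw [abs_le]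
    constructor <;> nlinarith

lemma lipschitzWith_one_fract_sq_sub_fract :
    LipschitzWith 1 (fun t : ℝ => Int.fract t ^ 2 - Int.fract t) := by
  refine LipschitzWith.of_dist_le_mul fun s t => ?_
  rw [NNReal.coe_one, one_mul, Real.dist_eq, Real.dist_eq]
  rcases le_total s t with hst | hts
  · simpa [abs_sub_comm s t, abs_of_nonneg (sub_nonneg.2 hst)]
      using abs_fract_sq_sub_fract_sub_le_of_le hst
  · simpa [abs_sub_comm, abs_of_nonneg (sub_nonneg.2 hts)]
      using abs_fract_sq_sub_fract_sub_le_of_le hts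

lemma sq_sub_yarotsky (m : ℕ) (x : ℝ) :
    x ^ 2 - yarotsky m x
      = (Int.fract (x * 2 ^ m) ^ 2 - Int.fract (x * 2 ^ m)) / (2 ^ m) ^ 2 := by
  have hfloor : (⌊x * 2 ^ m⌋ : ℝ) = x * 2 ^ m - Int.fract (x * 2 ^ m) := by
    rw [Int.self_sub_fract]
  simp only [yarotsky]
  field_simp
  rw [hfloor]
  ring

theorem stmt_2 (m : ℕ) :
    ∀ x ∈ Set.Icc (0 : ℝ) 1, ∀ y ∈ Set.Icc (0 : ℝ) 1,
      |(x ^ 2 - yarotsky m x) - (y ^ 2 - yarotsky m y)| ≤ (1 / 2 ^ m) * |x - y| := by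
  intro x _ y _
  have hpos : (0 : ℝ) < 2 ^ m := by positivity
  have hscaled := lipschitzWith_one_fract_sq_sub_fract.dist_le_mul (x * 2 ^ m) (y * 2 ^ m)
  rw [NNReal.coe_one, one_mul, Real.dist_eq, Real.dist_eq, ← sub_mul, abs_mul,
    abs_of_pos hpos] at hscaled
  rw [sq_sub_yarotsky, sq_sub_yarotsky, div_sub_div_same, abs_div, abs_of_pos (pow_pos hpos 2),
    div_le_iff₀ (by positivity)]
  calc _ ≤ |x - y| * 2 ^ m := hscaled
    _ = 1 / 2 ^ m * |x - y| * (2 ^ m) ^ 2 := by field_simp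
end
end

section
/- Let M, N > 0, m ∈ ℕ, and let f_m : [0,1] → ℝ be a function with Lipschitz seminorm of (x ↦ x² − f_m(x)) on [0,1] at most 1/2^m. Define ×̂_m(x,y) = ((M+N)²/4)·( f_m(|x+y|/(M+N)) − f_m(|x−y|/(M+N)) ) for (x,y) ∈ [−M,M] × [−N,N]. Then for every fixed y ∈ [−N,N], the Lipschitz seminorm of x ↦ xy − ×̂_m(x,y) on [−M,M] is at most (M+N)/2^{m+1}. -/
/-!
Polarization, `x * y = ((x + y)² - (x - y)²) / 4`, writes `x * y - ×̂_m(x, y)` as the same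
polarized expression built from `g t = t² - f_m t` instead of `f_m`. The arguments
`|x ± y| / (M + N)` stay in `[0, 1]` and are `1 / (M + N)`-Lipschitz in `x`, so each of the two
terms contributes `(M + N)² / 4 · 2⁻ᵐ / (M + N)` to the Lipschitz constant.
-/

open Set

/-- The paper's `×̂`, with `S = M + N` and `g = f_m`. -/
noncomputable def polarized (g : ℝ → ℝ) (S x y : ℝ) : ℝ :=
  S ^ 2 / 4 * (g (|x + y| / S) - g (|x - y| / S))

lemma polarized_sq {S : ℝ} (hS : S ≠ 0) (x y : ℝ) : polarized (· ^ 2) S x y = x * y := by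
  simp only [polarized, div_pow, sq_abs]
  field_simp
  ring

lemma polarized_sub (f g : ℝ → ℝ) (S x y : ℝ) :
    polarized (fun t => f t - g t) S x y = polarized f S x y - polarized g S x y := by
  simp only [polarized]
  ring

lemma abs_div_mem_Icc {S a : ℝ} (hS : 0 < S) (ha : |a| ≤ S) : |a| / S ∈ Icc (0 : ℝ) 1 :=
  ⟨by positivity, (div_le_one hS).mpr ha⟩

lemma abs_abs_add_div_sub_le {S : ℝ} (hS : 0 < S) (a b c : ℝ) :
    |(|a + c| / S) - |b + c| / S| ≤ |a - b| / S := by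
  rw [div_sub_div_same, abs_div, abs_of_pos hS]
  exact div_le_div_of_nonneg_right
    (by simpa using abs_abs_sub_abs_le_abs_sub (a + c) (b + c)) hS.le

lemma abs_comp_abs_add_div_sub_le {g : ℝ → ℝ} {K S : ℝ} (hS : 0 < S) (hK : 0 ≤ K)
    (hg : ∀ u ∈ Icc (0 : ℝ) 1, ∀ v ∈ Icc (0 : ℝ) 1, |g u - g v| ≤ K * |u - v|)
    {a b c : ℝ} (ha : |a + c| ≤ S) (hb : |b + c| ≤ S) :
    |g (|a + c| / S) - g (|b + c| / S)| ≤ K * (|a - b| / S) :=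
  (hg _ (abs_div_mem_Icc hS ha) _ (abs_div_mem_Icc hS hb)).trans <|
    mul_le_mul_of_nonneg_left (abs_abs_add_div_sub_le hS a b c) hK

lemma abs_polarized_sub_polarized_le {g : ℝ → ℝ} {K S : ℝ} (hS : 0 < S) (hK : 0 ≤ K)
    (hg : ∀ u ∈ Icc (0 : ℝ) 1, ∀ v ∈ Icc (0 : ℝ) 1, |g u - g v| ≤ K * |u - v|)
    {x₁ x₂ y : ℝ} (hx₁ : |x₁| + |y| ≤ S) (hx₂ : |x₂| + |y| ≤ S) :
    |polarized g S x₁ y - polarized g S x₂ y| ≤ S * K / 2 * |x₁ - x₂| := by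
  have hplus := abs_comp_abs_add_div_sub_le hS hK hg (c := y)
    ((abs_add_le x₁ y).trans hx₁) ((abs_add_le x₂ y).trans hx₂)
  have hminus := abs_comp_abs_add_div_sub_le hS hK hg (c := -y)
    ((abs_add_le x₁ (-y)).trans (by rwa [abs_neg])) ((abs_add_le x₂ (-y)).trans (by rwa [abs_neg]))
  simp only [← sub_eq_add_neg] at hminus
  calc |polarized g S x₁ y - polarized g S x₂ y|
      = S ^ 2 / 4 * |(g (|x₁ + y| / S) - g (|x₂ + y| / S))
          - (g (|x₁ - y| / S) - g (|x₂ - y| / S))| := by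
        rw [polarized, polarized, ← mul_sub, abs_mul, abs_of_nonneg (by positivity)]
        ring_nf
    _ ≤ S ^ 2 / 4 * (K * (|x₁ - x₂| / S) + K * (|x₁ - x₂| / S)) := by
        gcongr
        exact (abs_sub _ _).trans (add_le_add hplus hminus)
    _ = S * K / 2 * |x₁ - x₂| := by
        field_simp
        ring

theorem stmt_3 (M N : ℝ) (hM : 0 < M) (hN : 0 < N) (m : ℕ) (fm : ℝ → ℝ)
    (hfm : ∀ x ∈ Set.Icc (0 : ℝ) 1, ∀ y ∈ Set.Icc (0 : ℝ) 1,
      |(x ^ 2 - fm x) - (y ^ 2 - fm y)| ≤ (1 / 2 ^ m) * |x - y|) :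
    ∀ y ∈ Set.Icc (-N) N, ∀ x₁ ∈ Set.Icc (-M) M, ∀ x₂ ∈ Set.Icc (-M) M,
      |(x₁ * y - (M + N) ^ 2 / 4 *
          (fm (|x₁ + y| / (M + N)) - fm (|x₁ - y| / (M + N))))
        - (x₂ * y - (M + N) ^ 2 / 4 *
          (fm (|x₂ + y| / (M + N)) - fm (|x₂ - y| / (M + N))))|
        ≤ (M + N) / 2 ^ (m + 1) * |x₁ - x₂| := by
  intro y hy x₁ hx₁ x₂ hx₂
  have hS : 0 < M + N := add_pos hM hN
  have hy' : |y| ≤ N := abs_le.mpr hy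
  have hpolar : ∀ x, x * y - (M + N) ^ 2 / 4 *
      (fm (|x + y| / (M + N)) - fm (|x - y| / (M + N)))
        = polarized (fun t => t ^ 2 - fm t) (M + N) x y := fun x => by
    rw [polarized_sub, polarized_sq hS.ne']
    rfl
  rw [hpolar, hpolar]
  calc _ ≤ (M + N) * (1 / 2 ^ m) / 2 * |x₁ - x₂| :=
        abs_polarized_sub_polarized_le hS (by positivity) hfm
          (by linarith [abs_le.mpr hx₁]) (by linarith [abs_le.mpr hx₂])
    _ = (M + N) / 2 ^ (m + 1) * |x₁ - x₂| := by
        rw [pow_succ]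
        ring
end

section
/- Let λ > 0 and define x ⋆ y = σ(y + λx − λ) − σ(−y + λx − λ) for x ∈ [0,1] and y ∈ [−λ, λ], where σ(t) = max{t, 0} is the ReLU function. Then: (i) for x ∈ {0, 1} and y ∈ [−λ, λ], x ⋆ y = x·y; (ii) for x ∈ [0,1] and y ∈ [0, λ], 0 ≤ x ⋆ y ≤ x·y; (iii) for x ∈ [0,1] and y ∈ [−λ, 0], x·y ≤ x ⋆ y ≤ 0. -/
noncomputable section

/-- The ReLU activation function. -/
def relu (t : ℝ) : ℝ := max t 0

/-- The star operation `x ⋆ y = σ(y + λx − λ) − σ(−y + λx − λ)`. -/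
def star (lam x y : ℝ) : ℝ := relu (y + lam * x - lam) - relu (-y + lam * x - lam)

/-! With `a = λ(1 - x) ≥ 0`, `x ⋆ y = σ(y - a) - σ(-y - a)` is soft thresholding of `y` at level `a`:
an odd function of `y` which, for `y ≥ 0`, equals `σ(y - a)`. Hence `0 ≤ x ⋆ y`, and
`y - a ≤ x y` because `y (1 - x) ≤ λ (1 - x)`. The case `y ≤ 0` follows by oddness. -/

lemma relu_nonneg (t : ℝ) : 0 ≤ relu t := le_max_right t 0

lemma relu_of_nonpos {t : ℝ} (ht : t ≤ 0) : relu t = 0 := max_eq_right ht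

lemma relu_le {t c : ℝ} (htc : t ≤ c) (hc : 0 ≤ c) : relu t ≤ c := max_le htc hc

lemma relu_sub_relu_neg (t : ℝ) : relu t - relu (-t) = t :=
  max_zero_sub_max_neg_zero_eq_self t

lemma star_neg_right (lam x y : ℝ) : _root_.star lam x (-y) = -_root_.star lam x y := by
  simp only [_root_.star, neg_neg]
  ring

lemma star_zero_left {lam y : ℝ} (hy₁ : -lam ≤ y) (hy₂ : y ≤ lam) : _root_.star lam 0 y = 0 := by
  simp only [_root_.star, mul_zero, add_zero]
  rw [relu_of_nonpos (by linarith), relu_of_nonpos (by linarith), sub_zero]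

lemma star_one_left (lam y : ℝ) : _root_.star lam 1 y = y := by
  simp only [_root_.star, mul_one, add_sub_cancel_right]
  exact relu_sub_relu_neg y

lemma star_of_nonneg {lam x y : ℝ} (hx : x ≤ 1) (hy₀ : 0 ≤ y) (hy : y ≤ lam) :
    _root_.star lam x y = relu (y + lam * x - lam) := by
  rw [_root_.star, relu_of_nonpos (t := -y + lam * x - lam) (by nlinarith), sub_zero]

lemma star_nonneg {lam x y : ℝ} (hx : x ≤ 1) (hy₀ : 0 ≤ y) (hy : y ≤ lam) :
    0 ≤ _root_.star lam x y := by
  rw [star_of_nonneg hx hy₀ hy]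
  exact relu_nonneg _

lemma star_le_mul {lam x y : ℝ} (hx₀ : 0 ≤ x) (hx₁ : x ≤ 1) (hy₀ : 0 ≤ y) (hy : y ≤ lam) :
    _root_.star lam x y ≤ x * y := by
  rw [star_of_nonneg hx₁ hy₀ hy]
  exact relu_le (by nlinarith) (mul_nonneg hx₀ hy₀)

lemma star_nonpos {lam x y : ℝ} (hx : x ≤ 1) (hy₀ : -lam ≤ y) (hy : y ≤ 0) :
    _root_.star lam x y ≤ 0 := by
  have := star_nonneg (lam := lam) (y := -y) hx (by linarith) (by linarith)
  rw [star_neg_right] at this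
  linarith

lemma mul_le_star {lam x y : ℝ} (hx₀ : 0 ≤ x) (hx₁ : x ≤ 1) (hy₀ : -lam ≤ y) (hy : y ≤ 0) :
    x * y ≤ _root_.star lam x y := by
  have := star_le_mul (lam := lam) (y := -y) hx₀ hx₁ (by linarith) (by linarith)
  rw [star_neg_right] at this
  linarith

theorem stmt_7_general (lam : ℝ) :
    (∀ x ∈ ({0, 1} : Set ℝ), ∀ y ∈ Set.Icc (-lam) lam, star lam x y = x * y) ∧
    (∀ x ∈ Set.Icc (0 : ℝ) 1, ∀ y ∈ Set.Icc 0 lam,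
      0 ≤ star lam x y ∧ star lam x y ≤ x * y) ∧
    (∀ x ∈ Set.Icc (0 : ℝ) 1, ∀ y ∈ Set.Icc (-lam) 0,
      x * y ≤ star lam x y ∧ star lam x y ≤ 0) := by
  refine ⟨?_, ?_, ?_⟩
  · rintro x (rfl | rfl) y ⟨hy₁, hy₂⟩
    · rw [star_zero_left hy₁ hy₂, zero_mul]
    · rw [star_one_left, one_mul]
  · rintro x ⟨hx₀, hx₁⟩ y ⟨hy₀, hy⟩
    exact ⟨star_nonneg hx₁ hy₀ hy, star_le_mul hx₀ hx₁ hy₀ hy⟩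
  · rintro x ⟨hx₀, hx₁⟩ y ⟨hy₀, hy⟩
    exact ⟨mul_le_star hx₀ hx₁ hy₀ hy, star_nonpos hx₁ hy₀ hy⟩

theorem stmt_7 (lam : ℝ) (hlam : 0 < lam) :
    (∀ x ∈ ({0, 1} : Set ℝ), ∀ y ∈ Set.Icc (-lam) lam, star lam x y = x * y) ∧
    (∀ x ∈ Set.Icc (0 : ℝ) 1, ∀ y ∈ Set.Icc 0 lam,
      0 ≤ star lam x y ∧ star lam x y ≤ x * y) ∧
    (∀ x ∈ Set.Icc (0 : ℝ) 1, ∀ y ∈ Set.Icc (-lam) 0,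
      x * y ≤ star lam x y ∧ star lam x y ≤ 0) :=
  stmt_7_general lam
end
end

section
/- Let λ > 0 and define x ⋆ y = σ(y + λx − λ) − σ(−y + λx − λ) with σ(t) = max{t,0}. Then for all x ∈ [0,1] and y₁, y₂ ∈ [−λ, λ] with y₂ − y₁ ∈ [−λ, λ] (assume |y₂ − y₁| ≤ λ), it holds that min{y₁, y₂} ≤ y₁ + x ⋆ (y₂ − y₁) ≤ max{y₁, y₂}. -/
noncomputable section

/-! With `c = λx − λ ≤ 0`, the map `d ↦ σ(d + c) − σ(−d + c)` is a soft-thresholding of `d`: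
for `d ≥ 0` the second term vanishes and the first lies in `[0, d]`, and symmetrically for
`d ≤ 0`. So `x ⋆ (y₂ − y₁)` lies between `0` and `y₂ − y₁`, and adding `y₁` puts
`y₁ + x ⋆ (y₂ − y₁)` between `y₁` and `y₂`. -/

theorem relu_add_sub_relu_neg_add_mem_uIcc {c : ℝ} (hc : c ≤ 0) (d : ℝ) :
    relu (d + c) - relu (-d + c) ∈ Set.uIcc 0 d := by
  rcases le_total 0 d with hd | hd
  · rw [Set.uIcc_of_le hd, relu, relu, max_eq_right (by linarith : -d + c ≤ 0), sub_zero]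
    exact ⟨le_max_right _ _, max_le (by linarith) hd⟩
  · rw [Set.uIcc_of_ge hd, relu, relu, max_eq_right (by linarith : d + c ≤ 0), zero_sub]
    exact ⟨le_neg.2 (max_le (by linarith) (neg_nonneg.2 hd)), neg_nonpos.2 (le_max_right _ _)⟩

theorem star_mem_uIcc {lam x : ℝ} (hlam : 0 ≤ lam) (hx : x ≤ 1) (y : ℝ) :
    star lam x y ∈ Set.uIcc 0 y := by
  simpa only [_root_.star, add_sub_assoc] using
    relu_add_sub_relu_neg_add_mem_uIcc (by nlinarith : lam * x - lam ≤ 0) y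

theorem stmt_8 (lam : ℝ) (hlam : 0 < lam) :
    ∀ x ∈ Set.Icc (0 : ℝ) 1, ∀ y₁ ∈ Set.Icc (-lam) lam, ∀ y₂ ∈ Set.Icc (-lam) lam,
      |y₂ - y₁| ≤ lam →
      min y₁ y₂ ≤ y₁ + star lam x (y₂ - y₁) ∧
        y₁ + star lam x (y₂ - y₁) ≤ max y₁ y₂ := by
  rintro x ⟨-, hx⟩ y₁ - y₂ - -
  have h := Set.mem_image_of_mem (y₁ + ·) (star_mem_uIcc hlam.le hx (y₂ - y₁))
  rwa [Set.image_const_add_uIcc, add_zero, add_sub_cancel] at h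
end
end

section
/- Consider the Lax-Friedrichs update U_j^{n+1} = (U_{j+1}^n + U_{j−1}^n)/2 − (λ/2)·(g(U_{j+1}^n) − g(U_{j−1}^n)) with g differentiable, |g'| ≤ F, and CFL number λ = 1/F. Then the scheme is total variation diminishing: ∑_j |U_{j+1}^{n+1} − U_j^{n+1}| ≤ ∑_j |U_{j+1}^n − U_j^n|, whenever these sums are finite (e.g. the sequence U^n is eventually constant on both ends). -/
/-!
Write `D k = U (k+1) - U k` and `H k = g (U (k+1)) - g (U k)`. The new increment is
`((D (j+1) - λ H (j+1)) + (D (j-1) + λ H (j-1))) / 2`: each old increment `D k` splits into a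
left-moving part `(D k - λ H k) / 2` and a right-moving part `(D k + λ H k) / 2`. The CFL
condition gives `|λ H k| ≤ |D k|`, so the absolute values of the two parts add up to exactly `|D k|`;
summing over `j` and reindexing the two shifted sums gives the total variation bound.
-/

lemma abs_sub_add_abs_add_of_abs_le {a b : ℝ} (h : |b| ≤ |a|) :
    |a - b| + |a + b| = 2 * |a| := by
  rcases abs_cases a with ⟨h1, h2⟩ <;> rcases abs_cases b with ⟨h3, h4⟩ <;>
    rcases abs_cases (a - b) with ⟨h5, h6⟩ <;> rcases abs_cases (a + b) with ⟨h7, h8⟩ <;>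
    linarith

lemma tsum_le_tsum_add_tsum_of_le_shift {ι : Type*} [AddGroup ι] {a f e : ι → ℝ} (m n : ι)
    (ha : 0 ≤ a) (hf : Summable f) (he : Summable e) (h : ∀ j, a j ≤ f (j + m) + e (j + n)) :
    Summable a ∧ ∑' j, a j ≤ ∑' j, f j + ∑' j, e j := by
  have hf' : Summable fun j => f (j + m) := (Equiv.addRight m).summable_iff.mpr hf
  have he' : Summable fun j => e (j + n) := (Equiv.addRight n).summable_iff.mpr he
  have ha' : Summable a := (hf'.add he').of_nonneg_of_le ha h
  refine ⟨ha', ?_⟩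
  calc ∑' j, a j ≤ ∑' j, (f (j + m) + e (j + n)) := ha'.tsum_le_tsum h (hf'.add he')
    _ = ∑' j, f (j + m) + ∑' j, e (j + n) := hf'.tsum_add he'
    _ = ∑' j, f j + ∑' j, e j :=
      congrArg₂ (· + ·) ((Equiv.addRight m).tsum_eq f) ((Equiv.addRight n).tsum_eq e)

noncomputable def laxFriedrichs (lam : ℝ) (g : ℝ → ℝ) (U : ℤ → ℝ) (j : ℤ) : ℝ :=
  (U (j + 1) + U (j - 1)) / 2 - lam / 2 * (g (U (j + 1)) - g (U (j - 1)))

section TotalVariation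

variable (lam : ℝ) (g : ℝ → ℝ) (U : ℤ → ℝ)

lemma laxFriedrichs_succ_sub (j : ℤ) :
    laxFriedrichs lam g U (j + 1) - laxFriedrichs lam g U j =
      ((U (j + 1 + 1) - U (j + 1) - lam * (g (U (j + 1 + 1)) - g (U (j + 1))))
        + (U (j + -1 + 1) - U (j + -1) + lam * (g (U (j + -1 + 1)) - g (U (j + -1))))) / 2 := by
  rw [laxFriedrichs, laxFriedrichs, add_sub_cancel_right, neg_add_cancel_right, ← sub_eq_add_neg]
  ring

theorem laxFriedrichs_totalVariation_le {F : ℝ} (hlam : 0 ≤ lam) (hcfl : lam * F ≤ 1)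
    (hg : ∀ x y, |g y - g x| ≤ F * |y - x|) (hsum : Summable fun j : ℤ => |U (j + 1) - U j|) :
    ∑' j : ℤ, |laxFriedrichs lam g U (j + 1) - laxFriedrichs lam g U j|
      ≤ ∑' j : ℤ, |U (j + 1) - U j| := by
  set D : ℤ → ℝ := fun k => U (k + 1) - U k
  set H : ℤ → ℝ := fun k => g (U (k + 1)) - g (U k)
  have hflux : ∀ k, |lam * H k| ≤ |D k| := fun k =>
    calc |lam * H k| = lam * |H k| := by rw [abs_mul, abs_of_nonneg hlam]
      _ ≤ lam * (F * |D k|) := mul_le_mul_of_nonneg_left (hg _ _) hlam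
      _ ≤ |D k| := by nlinarith [abs_nonneg (D k)]
  set left : ℤ → ℝ := fun k => |D k - lam * H k| / 2
  set right : ℤ → ℝ := fun k => |D k + lam * H k| / 2
  have hsplit : ∀ k, left k + right k = |D k| := fun k => by
    change |D k - lam * H k| / 2 + |D k + lam * H k| / 2 = |D k|
    linarith [abs_sub_add_abs_add_of_abs_le (hflux k)]
  have hleft : Summable left := hsum.of_nonneg_of_le (fun k => by positivity)
    fun k => by linarith [hsplit k, show 0 ≤ right k by positivity]
  have hright : Summable right := hsum.of_nonneg_of_le (fun k => by positivity)
    fun k => by linarith [hsplit k, show 0 ≤ left k by positivity]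
  have hstep : ∀ j, |laxFriedrichs lam g U (j + 1) - laxFriedrichs lam g U j|
      ≤ left (j + 1) + right (j + -1) := fun j => by
    change _ ≤ |D (j + 1) - lam * H (j + 1)| / 2 + |D (j + -1) + lam * H (j + -1)| / 2
    rw [laxFriedrichs_succ_sub]
    change |(D (j + 1) - lam * H (j + 1) + (D (j + -1) + lam * H (j + -1))) / 2| ≤ _
    rw [abs_div, abs_two]
    linarith [abs_add_le (D (j + 1) - lam * H (j + 1)) (D (j + -1) + lam * H (j + -1))]
  obtain ⟨-, htv⟩ := tsum_le_tsum_add_tsum_of_le_shift 1 (-1)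
    (fun j => abs_nonneg _) hleft hright hstep
  calc _ ≤ ∑' k, left k + ∑' k, right k := htv
    _ = ∑' k, |D k| := by rw [← hleft.tsum_add hright]; exact tsum_congr hsplit

end TotalVariation

theorem stmt_15 (F : ℝ) (hF : 0 < F) (g : ℝ → ℝ) (hdiff : Differentiable ℝ g)
    (hg : ∀ u : ℝ, |deriv g u| ≤ F)
    (lam : ℝ) (hlam : lam = 1 / F)
    (U Unext : ℤ → ℝ)
    (hscheme : ∀ j : ℤ, Unext j =
      (U (j + 1) + U (j - 1)) / 2 - lam / 2 * (g (U (j + 1)) - g (U (j - 1))))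
    (hsum : Summable fun j : ℤ => |U (j + 1) - U j|) :
    ∑' j : ℤ, |Unext (j + 1) - Unext j| ≤ ∑' j : ℤ, |U (j + 1) - U j| := by
  have hUnext : Unext = laxFriedrichs lam g U := funext hscheme
  have hlip : ∀ x y, |g y - g x| ≤ F * |y - x| := fun x y => by
    simpa only [Real.norm_eq_abs] using Convex.norm_image_sub_le_of_norm_deriv_le
      (fun u _ => hdiff u) (fun u _ => by simpa only [Real.norm_eq_abs] using hg u)
      convex_univ (Set.mem_univ x) (Set.mem_univ y)
  subst hUnext hlam
  exact laxFriedrichs_totalVariation_le _ g U (by positivity) (one_div_mul_cancel hF.ne').le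
    hlip hsum
end
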